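/- For every n ≥ 0 and every m ≥ 0, the number of permutations of [n] containing exactly m (a-cb)-subwords, the number containing exactly m (c-ab)-subwords, the number containing exactctly m (ba-c)-subwords, and the number containing exactly m (bc-a)-subwords are all equal; i.e. the four pattern statistics (a-cb), (c-ab), (ba-c), (bc-a) are equidistributed over S_n. -/
import Mathlib


/-- Number of (a-cb)-subwords of `π`: pairs of (0-based) indices `(i, j)` with
`i < j`, `j + 1 < n` and `π i < π (j+1) < π j`. -/
noncomputable def cntAdCB (n : ℕ) (π : Equiv.Perm (Fin n)) : ℕ :=
  {p : ℕ × ℕ | ∃ (hi : p.1 < n) (hj : p.2 + 1 < n),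
    p.1 < p.2 ∧ π ⟨p.1, hi⟩ < π ⟨p.2 + 1, hj⟩ ∧
      π ⟨p.2 + 1, hj⟩ < π ⟨p.2, Nat.lt_of_succ_lt hj⟩}.ncard

/-- Number of (c-ab)-subwords of `π`: pairs `(i, j)` with `i < j`, `j + 1 < n` and
`π j < π (j+1) < π i`. -/
noncomputable def cntCdAB (n : ℕ) (π : Equiv.Perm (Fin n)) : ℕ :=
  {p : ℕ × ℕ | ∃ (hi : p.1 < n) (hj : p.2 + 1 < n),
    p.1 < p.2 ∧ π ⟨p.2, Nat.lt_of_succ_lt hj⟩ < π ⟨p.2 + 1, hj⟩ ∧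
      π ⟨p.2 + 1, hj⟩ < π ⟨p.1, hi⟩}.ncard

/-- Number of (ba-c)-subwords of `π`: pairs `(i, j)` with `i + 1 < j < n` and
`π (i+1) < π i < π j`. -/
noncomputable def cntBAdC (n : ℕ) (π : Equiv.Perm (Fin n)) : ℕ :=
  {p : ℕ × ℕ | ∃ (hi : p.1 + 1 < n) (hj : p.2 < n),
    p.1 + 1 < p.2 ∧ π ⟨p.1 + 1, hi⟩ < π ⟨p.1, Nat.lt_of_succ_lt hi⟩ ∧
      π ⟨p.1, Nat.lt_of_succ_lt hi⟩ < π ⟨p.2, hj⟩}.ncard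

/-- Number of (bc-a)-subwords of `π`: pairs `(i, j)` with `i + 1 < j < n` and
`π j < π i < π (i+1)`. -/
noncomputable def cntBCdA (n : ℕ) (π : Equiv.Perm (Fin n)) : ℕ :=
  {p : ℕ × ℕ | ∃ (hi : p.1 + 1 < n) (hj : p.2 < n),
    p.1 + 1 < p.2 ∧ π ⟨p.2, hj⟩ < π ⟨p.1, Nat.lt_of_succ_lt hi⟩ ∧
      π ⟨p.1, Nat.lt_of_succ_lt hi⟩ < π ⟨p.1 + 1, hi⟩}.ncard

section Helpers
variable {n : ℕ}

private lemma sigma_apply (π : Equiv.Perm (Fin n)) (a : ℕ) (h : a < n) :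
    (Fin.revPerm.trans π) ⟨a, h⟩ = π ⟨n - 1 - a, by omega⟩ := by
  simp only [Equiv.trans_apply, Fin.revPerm_apply]
  congr 1
  apply Fin.ext
  simp [Fin.val_rev]
  omega

private lemma permArgCongr (π : Equiv.Perm (Fin n)) {a b : ℕ} (h : a < n) (h' : b < n)
    (hab : a = b) : π ⟨a, h⟩ = π ⟨b, h'⟩ := by subst hab; rfl

/-- value-complement turns (a-cb) into (c-ab). -/
private lemma cntCdAB_comp (π : Equiv.Perm (Fin n)) :
    cntCdAB n (π.trans Fin.revPerm) = cntAdCB n π := by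
  unfold cntCdAB cntAdCB
  congr 1
  ext p
  simp only [Set.mem_setOf_eq, Equiv.trans_apply, Fin.revPerm_apply, Fin.rev_lt_rev]
  tauto

/-- value-complement turns (bc-a) into (ba-c). -/
private lemma cntBAdC_comp (π : Equiv.Perm (Fin n)) :
    cntBAdC n (π.trans Fin.revPerm) = cntBCdA n π := by
  unfold cntBAdC cntBCdA
  congr 1
  ext p
  simp only [Set.mem_setOf_eq, Equiv.trans_apply, Fin.revPerm_apply, Fin.rev_lt_rev]
  tauto

/-- position-reversal turns (a-cb) into (bc-a). -/
private lemma cntBCdA_rev (π : Equiv.Perm (Fin n)) :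
    cntBCdA n (Fin.revPerm.trans π) = cntAdCB n π := by
  unfold cntBCdA cntAdCB
  set A : Set (ℕ × ℕ) := {p : ℕ × ℕ | ∃ (hi : p.1 < n) (hj : p.2 + 1 < n),
    p.1 < p.2 ∧ π ⟨p.1, hi⟩ < π ⟨p.2 + 1, hj⟩ ∧
      π ⟨p.2 + 1, hj⟩ < π ⟨p.2, Nat.lt_of_succ_lt hj⟩} with hA
  set B : Set (ℕ × ℕ) := {p : ℕ × ℕ | ∃ (hi : p.1 + 1 < n) (hj : p.2 < n),
    p.1 + 1 < p.2 ∧ (Fin.revPerm.trans π) ⟨p.2, hj⟩ <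
      (Fin.revPerm.trans π) ⟨p.1, Nat.lt_of_succ_lt hi⟩ ∧
      (Fin.revPerm.trans π) ⟨p.1, Nat.lt_of_succ_lt hi⟩ <
      (Fin.revPerm.trans π) ⟨p.1 + 1, hi⟩} with hB
  have hbij : Set.BijOn (fun p : ℕ × ℕ => (n - 2 - p.2, n - 1 - p.1)) A B := by
    refine ⟨?_, ?_, ?_⟩
    · rintro ⟨i, j⟩ ⟨hi, hj, hij, h1, h2⟩
      dsimp only [Set.mem_setOf_eq]
      refine ⟨by omega, by omega, by omega, ?_, ?_⟩
      · rw [sigma_apply, sigma_apply]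
        calc π ⟨n - 1 - (n - 1 - i), by omega⟩ = π ⟨i, hi⟩ := permArgCongr π _ _ (by omega)
          _ < π ⟨j + 1, hj⟩ := h1
          _ = π ⟨n - 1 - (n - 2 - j), by omega⟩ := permArgCongr π _ _ (by omega)
      · rw [sigma_apply, sigma_apply]
        calc π ⟨n - 1 - (n - 2 - j), by omega⟩ = π ⟨j + 1, hj⟩ := permArgCongr π _ _ (by omega)
          _ < π ⟨j, Nat.lt_of_succ_lt hj⟩ := h2
          _ = π ⟨n - 1 - (n - 2 - j + 1), by omega⟩ := permArgCongr π _ _ (by omega)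
    · rintro ⟨i, j⟩ ⟨hi, hj, hij, -, -⟩ ⟨i', j'⟩ ⟨hi', hj', hij', -, -⟩ h
      simp only [Prod.mk.injEq] at h
      ext <;> omega
    · rintro ⟨i, j⟩ ⟨hi, hj, hij, h1, h2⟩
      simp only [sigma_apply] at h1 h2
      refine ⟨(n - 1 - j, n - 2 - i), ⟨by omega, by omega, by omega, ?_, ?_⟩, ?_⟩
      · calc π ⟨n - 1 - j, by omega⟩ = π ⟨n - 1 - j, by omega⟩ := rfl
          _ < π ⟨n - 1 - i, by omega⟩ := h1
          _ = π ⟨n - 2 - i + 1, by omega⟩ := permArgCongr π _ _ (by omega)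
      · calc π ⟨n - 2 - i + 1, by omega⟩ = π ⟨n - 1 - i, by omega⟩ := permArgCongr π _ _ (by omega)
          _ < π ⟨n - 1 - (i + 1), by omega⟩ := h2
          _ = π ⟨n - 2 - i, by omega⟩ := permArgCongr π _ _ (by omega)
      · simp only [Prod.mk.injEq]
        constructor <;> omega
  rw [← hbij.image_eq, Set.ncard_image_of_injOn hbij.injOn]

end Helpers

private lemma ncard_shift {n m : ℕ} (cnt : (k : ℕ) → Equiv.Perm (Fin k) → ℕ)
    (F : Equiv.Perm (Fin n) → Equiv.Perm (Fin n))
    (hFF : ∀ π, F (F π) = π)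
    (h : ∀ π, cnt n (F π) = cntAdCB n π) :
    {π : Equiv.Perm (Fin n) | cntAdCB n π = m}.ncard =
      {π : Equiv.Perm (Fin n) | cnt n π = m}.ncard := by
  have hinj : Function.Injective F := Function.LeftInverse.injective hFF
  have himg : {π : Equiv.Perm (Fin n) | cnt n π = m} =
      F '' {π : Equiv.Perm (Fin n) | cntAdCB n π = m} := by
    ext π
    simp only [Set.mem_setOf_eq, Set.mem_image]
    constructor
    · intro hπ
      exact ⟨F π, by rw [← h (F π), hFF]; exact hπ, hFF π⟩
    · rintro ⟨ρ, hρ, rfl⟩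
      rw [h ρ]; exact hρ
  rw [himg, Set.ncard_image_of_injective _ hinj]

/-- The four pattern statistics (a-cb), (c-ab), (ba-c), (bc-a) are equidistributed
over `S_n`. -/
theorem equidistributed_class_two (n m : ℕ) :
    {π : Equiv.Perm (Fin n) | cntAdCB n π = m}.ncard =
      {π : Equiv.Perm (Fin n) | cntCdAB n π = m}.ncard ∧
    {π : Equiv.Perm (Fin n) | cntAdCB n π = m}.ncard =
      {π : Equiv.Perm (Fin n) | cntBAdC n π = m}.ncard ∧
    {π : Equiv.Perm (Fin n) | cntAdCB n π = m}.ncard =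
      {π : Equiv.Perm (Fin n) | cntBCdA n π = m}.ncard := by
  have hrevrev : ∀ π : Equiv.Perm (Fin n), (π.trans Fin.revPerm).trans Fin.revPerm = π := by
    intro π; ext x; simp
  have hrevrev' : ∀ π : Equiv.Perm (Fin n), Fin.revPerm.trans (Fin.revPerm.trans π) = π := by
    intro π; ext x; simp
  refine ⟨?_, ?_, ?_⟩
  · exact ncard_shift cntCdAB (fun π => π.trans Fin.revPerm) hrevrev cntCdAB_comp
  · exact ncard_shift cntBAdC (fun π => (Fin.revPerm.trans π).trans Fin.revPerm)
      (fun π => by ext x; simp) (fun π => by rw [cntBAdC_comp, cntBCdA_rev])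
  · exact ncard_shift cntBCdA (fun π => Fin.revPerm.trans π) hrevrev' cntBCdA_rev
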